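/- arXiv:0805.1889 — 5 statements merged into one kernel-verified Lean document; each statement's English description precedes it below -/
import Mathlib

section
/- If A is a pure subgroup of an Abelian p-group G and A has finite period (i.e., there is n with p^n·A = 0), then A is a direct summand of G (Kulikov's theorem). -/
/-!
Induct on the exponent `n` of `A`, proving more generally that a pure subgroup `A` of a subgroup
`K` splits off `K`. The subgroup `pA` is pure in `pK` with exponent `n - 1`, so `pK = pA ⊕ C`.
For `H = {g ∈ K | p g ∈ C}` one has `A + H = K`, and `A ∩ H` meets `pH` trivially: such an
element lies in `A ∩ pK = pA` and in `C`. A subgroup meeting `pH` trivially is a direct summand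
of `H`, because its image in the `𝔽_p`-vector space `H / pH` has a complement. Finally a
complement of `A ∩ H` in `H` is a complement of `A` in `K`.
-/

open Function

section Lattice

variable {α : Type*} [Lattice α] [OrderBot α]

def IsComplIn (k a b : α) : Prop := Disjoint a b ∧ a ⊔ b = k

theorem IsComplIn.of_inf {a b h k : α} (hah : a ⊔ h = k) (hb : IsComplIn h (a ⊓ h) b) :
    IsComplIn k a b := by
  obtain ⟨hdisj, hsup⟩ := hb
  have hbh : b ≤ h := le_sup_right.trans hsup.le
  refine ⟨?_, ?_⟩
  · rw [disjoint_iff, ← inf_eq_right.2 hbh, ← inf_assoc]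
    exact hdisj.eq_bot
  · rw [← hah, ← hsup, ← sup_assoc, sup_inf_self]

end Lattice

namespace AddSubgroup

variable {G Q : Type*} [AddCommGroup G] [AddCommGroup Q]

theorem isCompl_comap_of_isCompl_map {f : G →+ Q} (hf : Surjective f) {A : AddSubgroup G}
    {W : AddSubgroup Q} (hA : Disjoint A f.ker) (hW : IsCompl (A.map f) W) :
    IsCompl A (W.comap f) := by
  refine ⟨disjoint_def.2 fun {x} hxA hxW => ?_, codisjoint_iff.2 ?_⟩
  · have hfx : f x = 0 := disjoint_def.1 hW.disjoint (mem_map_of_mem f hxA) hxW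
    exact disjoint_def.1 hA hxA hfx
  · rw [← comap_top f, ← hW.sup_eq_top, ← comap_sup_eq f _ _ hf, comap_map_eq, sup_assoc,
      sup_eq_right.2 (f.ker_le_comap W)]

theorem exists_isCompl_of_disjoint {p : ℕ} (hp : p.Prime) {A P : AddSubgroup G}
    (hP : ∀ g : G, p • g ∈ P) (hAP : Disjoint A P) : ∃ B : AddSubgroup G, IsCompl A B := by
  have : Fact p.Prime := ⟨hp⟩
  let := QuotientAddGroup.zmodModule hP
  obtain ⟨W, hW⟩ := (toZModSubmodule p (A.map (QuotientAddGroup.mk' P))).exists_isCompl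
  refine ⟨W.toAddSubgroup.comap (QuotientAddGroup.mk' P),
    isCompl_comap_of_isCompl_map (QuotientAddGroup.mk'_surjective P) ?_ ?_⟩
  · rwa [QuotientAddGroup.ker_mk']
  · exact (toZModSubmodule p).symm.isCompl_iff.1 hW

theorem exists_isComplIn_of_disjoint_map_nsmul {p : ℕ} (hp : p.Prime) {T H : AddSubgroup G}
    (hTH : T ≤ H) (hdisj : Disjoint T (H.map (nsmulAddMonoidHom p))) :
    ∃ B : AddSubgroup G, IsComplIn H T B := by
  obtain ⟨B, hB⟩ := exists_isCompl_of_disjoint hp (A := T.addSubgroupOf H)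
    (P := (H.map (nsmulAddMonoidHom p)).addSubgroupOf H)
    (fun g => mem_addSubgroupOf.2 (mem_map_of_mem _ g.2))
    (disjoint_def.2 fun hxT hxP =>
      Subtype.ext (disjoint_def.1 hdisj hxT (mem_addSubgroupOf.1 hxP)))
  have hT : (T.addSubgroupOf H).map H.subtype = T := by
    rw [addSubgroupOf_map_subtype, inf_eq_left.2 hTH]
  refine ⟨B.map H.subtype, ?_, ?_⟩
  · rw [← hT, disjoint_iff, ← map_inf_eq _ _ _ H.subtype_injective, hB.inf_eq_bot, map_bot]
  · rw [← hT, ← map_sup, hB.sup_eq_top, ← AddMonoidHom.range_eq_map, range_subtype]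

def IsPureIn (p : ℕ) (A K : AddSubgroup G) : Prop :=
  ∀ m : ℕ, ∀ a ∈ A, (∃ g ∈ K, p ^ m • g = a) → ∃ b ∈ A, p ^ m • b = a

variable {p : ℕ} {A K C : AddSubgroup G}

theorem IsPureIn.map_nsmul (hpure : IsPureIn p A K) :
    IsPureIn p (A.map (nsmulAddMonoidHom p)) (K.map (nsmulAddMonoidHom p)) := by
  rintro m _ ⟨a, ha, rfl⟩ ⟨_, ⟨k, hk, rfl⟩, hka⟩
  obtain ⟨b, hb, hba⟩ := hpure (m + 1) _ (nsmul_mem ha p)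
    ⟨k, hk, by simpa [pow_succ, mul_smul] using hka⟩
  exact ⟨p • b, mem_map_of_mem _ hb, by simpa [pow_succ, mul_smul] using hba⟩

theorem IsPureIn.disjoint_inf_comap (hpure : IsPureIn p A K)
    (hC : Disjoint (A.map (nsmulAddMonoidHom p)) C) :
    Disjoint (A ⊓ (K ⊓ C.comap (nsmulAddMonoidHom p)))
      ((K ⊓ C.comap (nsmulAddMonoidHom p)).map (nsmulAddMonoidHom p)) := by
  refine disjoint_def.2 ?_
  rintro _ ⟨htA, -⟩ ⟨h, ⟨hK, hhC⟩, rfl⟩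
  obtain ⟨b, hb, hbh⟩ := hpure 1 _ htA ⟨h, hK, by simp⟩
  exact disjoint_def.1 hC ⟨b, hb, by simpa using hbh⟩ hhC

theorem sup_inf_comap_nsmul_eq (hAK : A ≤ K)
    (hsup : A.map (nsmulAddMonoidHom p) ⊔ C = K.map (nsmulAddMonoidHom p)) :
    A ⊔ (K ⊓ C.comap (nsmulAddMonoidHom p)) = K := by
  refine le_antisymm (sup_le hAK inf_le_left) fun g hg => ?_
  obtain ⟨_, ⟨a, ha, rfl⟩, c, hc, hac⟩ := mem_sup.1 (hsup ▸ mem_map_of_mem _ hg)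
  have hgaC : nsmulAddMonoidHom p (g - a) ∈ C := by
    rwa [map_sub, ← hac, add_sub_cancel_left]
  exact mem_sup.2 ⟨a, ha, g - a, mem_inf.2 ⟨sub_mem hg (hAK ha), hgaC⟩, add_sub_cancel _ _⟩

theorem exists_isComplIn_of_isPureIn (hp : p.Prime) (hAK : A ≤ K) (hpure : IsPureIn p A K)
    {n : ℕ} (hn : ∀ a ∈ A, p ^ n • a = 0) : ∃ B : AddSubgroup G, IsComplIn K A B := by
  induction n generalizing A K with
  | zero =>
    obtain rfl : A = ⊥ := (eq_bot_iff_forall A).2 fun a ha => by simpa using hn a ha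
    exact ⟨K, disjoint_bot_left, bot_sup_eq K⟩
  | succ n ih =>
    obtain ⟨C, hC⟩ := ih (map_mono hAK) hpure.map_nsmul <| by
      rintro _ ⟨a, ha, rfl⟩
      simpa [pow_succ, mul_smul] using hn a ha
    obtain ⟨B, hB⟩ := exists_isComplIn_of_disjoint_map_nsmul hp inf_le_right
      (hpure.disjoint_inf_comap hC.1)
    exact ⟨B, IsComplIn.of_inf (sup_inf_comap_nsmul_eq hAK hC.2) hB⟩

end AddSubgroup

theorem stmt_1_general (p : ℕ) (hp : p.Prime) (G : Type) [AddCommGroup G]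
    (A : AddSubgroup G)
    (hpure : ∀ n : ℕ, ∀ a ∈ A, (∃ g : G, p ^ n • g = a) → ∃ b ∈ A, p ^ n • b = a)
    (hper : ∃ n : ℕ, ∀ a ∈ A, p ^ n • a = 0) :
    ∃ B : AddSubgroup G, IsCompl A B := by
  obtain ⟨n, hn⟩ := hper
  obtain ⟨B, hdisj, hsup⟩ := AddSubgroup.exists_isComplIn_of_isPureIn hp le_top
    (fun m a ha ⟨g, _, hg⟩ => hpure m a ha ⟨g, hg⟩) hn
  exact ⟨B, hdisj, codisjoint_iff.2 hsup⟩

/-- Kulikov: a pure subgroup of finite period of an Abelian p-group is a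
direct summand. -/
theorem stmt_1 (p : ℕ) (hp : p.Prime) (G : Type) [AddCommGroup G]
    (hG : ∀ g : G, ∃ n : ℕ, addOrderOf g = p ^ n)
    (A : AddSubgroup G)
    (hpure : ∀ n : ℕ, ∀ a ∈ A, (∃ g : G, p ^ n • g = a) → ∃ b ∈ A, p ^ n • b = a)
    (hper : ∃ n : ℕ, ∀ a ∈ A, p ^ n • a = 0) :
    ∃ B : AddSubgroup G, IsCompl A B :=
  stmt_1_general p hp G A hpure hper
end

section
/- A countable Abelian p-group G is a direct sum of cyclic groups if and only if every nonzero element of G has finite height (Prüfer's theorem). -/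
/-!
In a direct sum of copies of `ZMod (p ^ k i)`, an element with nonzero `i`-th coordinate is not
divisible by `p ^ k i`. Conversely, let `y ≠ 0` with `p • y = 0` have height `h`, say
`y = p ^ h • b`. Then `b` generates a copy of `ZMod (p ^ (h + 1))` in `G ⧸ p ^ (h + 1) • G`, and as
`ZMod n` is self-injective this copy is a retract, so `y` lies in a cyclic direct summand of `G`.
Splitting off such summands one at a time from the complement of those already chosen, each step
lowering the order of the complementary component of some element, and visiting every element
infinitely often, exhausts the countable group `G` and writes it as the direct sum of the summands.
-/

open DirectSum

namespace ZMod

theorem exists_mul_eq_of_forall_mul_eq_zero {n : ℕ} [NeZero n] {a c : ZMod n}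
    (h : ∀ r : ZMod n, r * a = 0 → r * c = 0) : ∃ d, d * a = c := by
  obtain ⟨α, rfl⟩ := intCast_surjective a
  obtain ⟨γ, rfl⟩ := intCast_surjective c
  set g : ℤ := (α.gcd n : ℤ) with hg
  obtain ⟨k, hk⟩ : g ∣ n := Int.gcd_dvd_right α n
  have hk0 : k ≠ 0 := by rintro rfl; simp [NeZero.ne n] at hk
  -- `k = n / gcd α n` kills `α`, hence `γ`; so `gcd α n ∣ γ`, a multiple of `α` by Bézout.
  have hkα : ((k * α : ℤ) : ZMod n) = 0 := by
    obtain ⟨α', hα'⟩ := Int.gcd_dvd_left α n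
    rw [intCast_zmod_eq_zero_iff_dvd, hk, hα']
    exact ⟨α', by ring⟩
  have hkγ := h k (by exact_mod_cast hkα)
  obtain ⟨e, rfl⟩ : g ∣ γ := by
    rw [← Int.cast_mul, intCast_zmod_eq_zero_iff_dvd, hk, mul_comm] at hkγ
    exact Int.dvd_of_mul_dvd_mul_left hk0 hkγ
  refine ⟨e * α.gcdA n, ?_⟩
  rw [hg, Int.gcd_eq_gcd_ab]
  push_cast
  rw [natCast_self]
  ring

theorem baer_self (n : ℕ) [NeZero n] : Module.Baer (ZMod n) (ZMod n) := by
  intro I g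
  have : IsPrincipalIdealRing (ZMod n) :=
    .of_surjective (Int.castRingHom (ZMod n)) intCast_surjective
  obtain ⟨a, rfl⟩ := (IsPrincipalIdealRing.principal I).principal
  have ha : a ∈ Submodule.span (ZMod n) {a} := Submodule.mem_span_singleton_self a
  obtain ⟨d, hd⟩ := exists_mul_eq_of_forall_mul_eq_zero (c := g ⟨a, ha⟩) fun r hr => by
    rw [← smul_eq_mul, ← map_smul]
    convert map_zero g
    exact Subtype.ext hr
  refine ⟨LinearMap.toSpanSingleton (ZMod n) (ZMod n) d, fun x hx => ?_⟩
  obtain ⟨s, rfl⟩ := Submodule.mem_span_singleton.mp hx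
  have hsa : (⟨s • a, hx⟩ : Submodule.span (ZMod n) {a}) = s • ⟨a, ha⟩ := rfl
  rw [LinearMap.toSpanSingleton_apply, hsa, map_smul, ← hd]
  simp only [smul_eq_mul]
  ring

theorem exists_mul_eq_pow_of_ne_zero {p : ℕ} (hp : p.Prime) {h : ℕ} {t : ZMod (p ^ (h + 1))}
    (ht : t ≠ 0) : ∃ s, s * t = (p : ZMod (p ^ (h + 1))) ^ h := by
  have : NeZero (p ^ (h + 1)) := ⟨pow_ne_zero _ hp.ne_zero⟩
  refine exists_mul_eq_of_forall_mul_eq_zero fun r hr => ?_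
  obtain ⟨u, hu⟩ : p ∣ r.val := by
    by_contra hpr
    have hunit : IsUnit r := by
      rw [← natCast_zmod_val r, isUnit_iff_coprime]
      exact (Nat.Coprime.pow_right _ ((hp.coprime_iff_not_dvd.mpr hpr).symm))
    exact ht (hunit.mul_right_eq_zero.mp hr)
  rw [← natCast_zmod_val r, hu]
  calc ((p * u : ℕ) : ZMod (p ^ (h + 1))) * (p : ZMod (p ^ (h + 1))) ^ h
        = u * ((p ^ (h + 1) : ℕ) : ZMod (p ^ (h + 1))) := by push_cast; ring
    _ = 0 := by rw [natCast_self, mul_zero]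

end ZMod

theorem Module.exists_linearMap_zmod_apply_eq_one {n : ℕ} [NeZero n] {M : Type*} [AddCommGroup M]
    [Module (ZMod n) M] {v : M} (hv : ∀ t : ZMod n, t • v = 0 → t = 0) :
    ∃ φ : M →ₗ[ZMod n] ZMod n, φ v = 1 := by
  have hinj : Function.Injective (LinearMap.toSpanSingleton (ZMod n) M v) :=
    (injective_iff_map_eq_zero _).mpr hv
  obtain ⟨φ, hφ⟩ := (ZMod.baer_self n).extension_property _ hinj LinearMap.id
  exact ⟨φ, by simpa using LinearMap.congr_fun hφ 1⟩

section CyclicRetract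

variable {G : Type*} [AddCommGroup G] {p : ℕ}

theorem exists_zmod_retract_of_smul_eq_zero (hp : p.Prime) {y : G} (hpy : p • y = 0)
    (hy : ∃ n, ¬ ∃ x : G, p ^ n • x = y) :
    ∃ (k : ℕ) (ψ : ZMod (p ^ k) →+ G) (χ : G →+ ZMod (p ^ k)),
      (∀ a, χ (ψ a) = a) ∧ y ∈ ψ.range := by
  obtain ⟨h, hb, hmax⟩ :=
    Nat.exists_not_and_succ_of_not_zero_of_exists (not_not.mpr ⟨y, by simp⟩) hy
  obtain ⟨b, rfl⟩ := not_not.mp hb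
  have : NeZero (p ^ (h + 1)) := ⟨pow_ne_zero _ hp.ne_zero⟩
  have hnb : p ^ (h + 1) • b = 0 := by rw [pow_succ', mul_smul, hpy]
  let ψ : ZMod (p ^ (h + 1)) →+ G :=
    ZMod.lift _ ⟨zmultiplesHom G b, by rw [zmultiplesHom_apply, natCast_zsmul, hnb]⟩
  have hψ (m : ℕ) : ψ m = m • b := by
    rw [← Int.cast_natCast, ZMod.lift_coe]
    simp
  -- `b` generates a copy of `ZMod (p ^ (h + 1))` in `G ⧸ p ^ (h + 1) G`: its annihilator would
  -- otherwise contain `p ^ h`, making `p ^ h • b` divisible by `p ^ (h + 1)`.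
  let H : AddSubgroup G := (DistribSMul.toAddMonoidHom G (p ^ (h + 1))).range
  let _ := QuotientAddGroup.zmodModule (H := H) fun x => ⟨x, rfl⟩
  obtain ⟨φ, hφ⟩ := Module.exists_linearMap_zmod_apply_eq_one (v := (b : G ⧸ H)) fun t ht => by
    by_contra ht0
    obtain ⟨s, hs⟩ := ZMod.exists_mul_eq_pow_of_ne_zero hp ht0
    apply hmax
    have : ((p ^ h • b : G) : G ⧸ H) = 0 := by
      rw [QuotientAddGroup.mk_nsmul, ← Nat.cast_smul_eq_nsmul (ZMod (p ^ (h + 1))), Nat.cast_pow,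
        ← hs, mul_smul, ht, smul_zero]
    exact (QuotientAddGroup.eq_zero_iff _).mp this
  refine ⟨h + 1, ψ, φ.toAddMonoidHom.comp (QuotientAddGroup.mk' H), fun a => ?_, p ^ h, ?_⟩
  · obtain ⟨m, rfl⟩ := ZMod.natCast_zmod_surjective a
    simp [hψ, map_nsmul, hφ]
  · simpa using hψ (p ^ h)

theorem exists_zmod_retract_step (hp : p.Prime)
    (hht : ∀ g : G, g ≠ 0 → ∃ n, ¬ ∃ x : G, p ^ n • x = g)
    {e : G →+ G} (he : e.comp e = e) (g : G) (j : ℕ) :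
    ∃ (k : ℕ) (ψ : ZMod (p ^ k) →+ G) (χ : G →+ ZMod (p ^ k)),
      (∀ a, χ (ψ a) = a) ∧ (∀ x, χ (e x) = 0) ∧ (∀ a, e (ψ a) = 0) ∧
      (p ^ (j + 1) • (g - e g) = 0 → p ^ j • (g - (e + ψ.comp χ) g) = 0) := by
  have hee (x : G) : e (e x) = e x := DFunLike.congr_fun he x
  set y := p ^ j • (g - e g) with hy_def
  have hpj : p ^ (j + 1) • (g - e g) = p • y := by rw [pow_succ', mul_smul]
  by_cases hy : p • y = 0 ∧ y ≠ 0
  swap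
  · have : Subsingleton (ZMod (p ^ 0)) := ZMod.subsingleton_iff.mpr (pow_zero p)
    refine ⟨0, 0, 0, fun _ => Subsingleton.elim _ _, fun _ => rfl, fun _ => map_zero e,
      fun hj => ?_⟩
    simp only [AddMonoidHom.comp_zero, add_zero]
    exact not_and_not_right.mp hy (hpj ▸ hj)
  obtain ⟨hpy, hy0⟩ := hy
  -- a cyclic retract of `ker e` through `y`, composed with the projection `x ↦ x - e x`, is a
  -- retract of `G` orthogonal to `e`
  have hey : y ∈ e.ker := by simp [hy_def, hee]
  obtain ⟨n, hn⟩ := hht y hy0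
  obtain ⟨k, ψ, χ, hχψ, t, ht⟩ := exists_zmod_retract_of_smul_eq_zero (y := (⟨y, hey⟩ : e.ker)) hp
    (Subtype.ext hpy) ⟨n, fun ⟨x, hx⟩ => hn ⟨x, congrArg Subtype.val hx⟩⟩
  let π : G →+ e.ker := (AddMonoidHom.id G - e).codRestrict e.ker fun x => by simp [hee]
  have hπ (x : e.ker) : π x = x := Subtype.ext (by simp [π, AddMonoidHom.mem_ker.mp x.2])
  have hπe (x : G) : π (e x) = 0 := Subtype.ext (by simp [π, hee])
  refine ⟨k, e.ker.subtype.comp ψ, χ.comp π, fun a => by simp [hπ, hχψ], fun x => by simp [hπe],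
    fun a => (ψ a).2, fun _ => ?_⟩
  have hπy : π (p ^ j • g) = ⟨y, hey⟩ := Subtype.ext (by simp [π, hy_def, smul_sub])
  calc p ^ j • (g - (e + (e.ker.subtype.comp ψ).comp (χ.comp π)) g)
      = y - ψ (χ (π (p ^ j • g))) := by
        simp only [map_nsmul, AddSubgroup.coe_nsmul]
        simp [hy_def, smul_sub, sub_add_eq_sub_sub]
    _ = 0 := by rw [hπy, ← ht, hχψ, ht]; exact sub_self y

end CyclicRetract

section DirectSum

variable {G : Type*} [AddCommGroup G]

theorem nonempty_addEquiv_directSum_of_biorthogonal {ι : Type*} [DecidableEq ι]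
    {A : ι → Type*} [∀ i, AddCommGroup (A i)] (ψ : ∀ i, A i →+ G) (χ : ∀ i, G →+ A i)
    (hχψ : ∀ i a, χ i (ψ i a) = a) (hχψ_ne : ∀ i j, i ≠ j → ∀ a, χ i (ψ j a) = 0)
    (hspan : ∀ x, ∃ s : Finset ι, ∑ i ∈ s, ψ i (χ i x) = x) : Nonempty (G ≃+ ⨁ i, A i) := by
  let Φ : (⨁ i, A i) →+ G := toAddMonoid ψ
  have hχΦ (i : ι) (y : ⨁ i, A i) : χ i (Φ y) = y i := by
    induction y using DirectSum.induction_on with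
    | zero => simp
    | of j a =>
      rw [toAddMonoid_of]
      by_cases h : i = j
      · subst h
        simp [hχψ]
      · simp [of_eq_of_ne _ _ _ h, hχψ_ne i j h]
    | add y z hy hz => simp [hy, hz]
  refine ⟨(AddEquiv.ofBijective Φ ⟨?_, fun x => ?_⟩).symm⟩
  · refine (injective_iff_map_eq_zero Φ).mpr fun y hy => DFinsupp.ext fun i => ?_
    simpa [hy] using (hχΦ i y).symm
  · obtain ⟨s, hs⟩ := hspan x
    exact ⟨∑ i ∈ s, of A i (χ i x), by simp [Φ, hs]⟩

variable {A : ℕ → Type*} [∀ n, AddCommGroup (A n)]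

def partialProj (ψ : ∀ n, A n →+ G) (χ : ∀ n, G →+ A n) (n : ℕ) : G →+ G :=
  ∑ i ∈ Finset.range n, (ψ i).comp (χ i)

variable {ψ : ∀ n, A n →+ G} {χ : ∀ n, G →+ A n}

theorem partialProj_succ (n : ℕ) :
    partialProj ψ χ (n + 1) = partialProj ψ χ n + (ψ n).comp (χ n) :=
  Finset.sum_range_succ _ n

/-- `ψ n` and `χ n` split `A n` off the kernel of `partialProj ψ χ n`, the projection onto the
first `n` summands. -/
structure IsSplittingSeq (ψ : ∀ n, A n →+ G) (χ : ∀ n, G →+ A n) : Prop where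
  retract : ∀ n a, χ n (ψ n a) = a
  apply_partialProj : ∀ n x, χ n (partialProj ψ χ n x) = 0
  partialProj_apply : ∀ n a, partialProj ψ χ n (ψ n a) = 0

namespace IsSplittingSeq

variable (h : IsSplittingSeq ψ χ)
include h

theorem apply_partialProj_of_lt {i n : ℕ} (hin : i < n) (x : G) :
    χ i (partialProj ψ χ n x) = χ i x := by
  induction n, hin using Nat.le_induction generalizing x with
  | base => simp [partialProj_succ, h.retract, h.apply_partialProj]
  | succ n hin ih =>
    have hψn (a : A n) : χ i (ψ n a) = 0 := by
      rw [← ih, h.partialProj_apply, map_zero]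
    simp [partialProj_succ, ih, hψn]

theorem partialProj_apply_of_lt {i n : ℕ} (hin : i < n) (a : A i) :
    partialProj ψ χ n (ψ i a) = ψ i a := by
  induction n, hin using Nat.le_induction with
  | base => simp [partialProj_succ, h.retract, h.partialProj_apply]
  | succ n hin ih =>
    have hχn : χ n (ψ i a) = 0 := by
      rw [← ih, h.apply_partialProj]
    simp [partialProj_succ, ih, hχn]

theorem apply_of_ne {i j : ℕ} (hij : i ≠ j) (a : A j) : χ i (ψ j a) = 0 := by
  rcases hij.lt_or_gt with hij | hji
  · rw [← h.apply_partialProj_of_lt hij, h.partialProj_apply, map_zero]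
  · rw [← h.partialProj_apply_of_lt hji, h.apply_partialProj]

theorem nonempty_addEquiv_directSum (hcover : ∀ x, ∃ n, partialProj ψ χ n x = x) :
    Nonempty (G ≃+ ⨁ n, A n) := by
  refine nonempty_addEquiv_directSum_of_biorthogonal ψ χ h.retract
    (fun i j hij => h.apply_of_ne hij) fun x => ?_
  obtain ⟨n, hn⟩ := hcover x
  exact ⟨Finset.range n, by simpa [partialProj, AddMonoidHom.finsetSum_apply] using hn⟩

end IsSplittingSeq

end DirectSum

section Idempotent

variable {G B : Type*} [AddCommGroup G] [AddCommGroup B] {e : G →+ G} {ψ : B →+ G} {χ : G →+ B}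

theorem add_comp_idem (he : e.comp e = e) (hχψ : ∀ a, χ (ψ a) = a)
    (hχe : ∀ x, χ (e x) = 0) (heψ : ∀ a, e (ψ a) = 0) :
    (e + ψ.comp χ).comp (e + ψ.comp χ) = e + ψ.comp χ := by
  have hee (x : G) : e (e x) = e x := DFunLike.congr_fun he x
  ext x
  simp [hχψ, hχe, heψ, hee]

theorem nsmul_sub_add_comp_apply_eq_zero (hχe : ∀ x, χ (e x) = 0) {n : ℕ} {x : G}
    (h : n • (x - e x) = 0) : n • (x - (e + ψ.comp χ) x) = 0 := by
  have : n • χ x = 0 := by simpa [hχe] using congrArg χ h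
  simp [smul_sub, ← map_nsmul, this, ← sub_sub, h]

end Idempotent

theorem Nat.exists_of_frequently_descend {P : ℕ → ℕ → Prop} (hmono : ∀ n j, P n j → P (n + 1) j)
    (hdescend : ∀ N j, ∃ n ≥ N, P n (j + 1) → P (n + 1) j) (j N : ℕ) (hN : P N j) :
    ∃ M, P M 0 := by
  induction j generalizing N with
  | zero => exact ⟨N, hN⟩
  | succ j ih =>
    obtain ⟨n, hn, h⟩ := hdescend N j
    exact ih (n + 1) (h (monotone_nat_of_le_succ (f := fun n => P n (j + 1)) (hmono · _) hn hN))

section Construction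

variable {G : Type*} [AddCommGroup G] {p : ℕ}

theorem exists_isSplittingSeq_zmod [Countable G] (hp : p.Prime)
    (htors : ∀ g : G, ∃ n, p ^ n • g = 0) (hht : ∀ g : G, g ≠ 0 → ∃ n, ¬ ∃ x : G, p ^ n • x = g) :
    ∃ (k : ℕ → ℕ) (ψ : ∀ n, ZMod (p ^ k n) →+ G) (χ : ∀ n, G →+ ZMod (p ^ k n)),
      IsSplittingSeq ψ χ ∧ ∀ x, ∃ n, partialProj ψ χ n x = x := by
  -- every task `(g, j)` recurs infinitely often along `task`
  obtain ⟨τ, hτ⟩ := exists_surjective_nat (G × ℕ)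
  let task (n : ℕ) : G × ℕ := τ n.unpair.1
  choose k ψ χ hχψ hχe heψ hprog using fun (e : {e : G →+ G // e.comp e = e}) (t : G × ℕ) =>
    exists_zmod_retract_step hp hht e.2 t.1 t.2
  let E (n : ℕ) : {e : G →+ G // e.comp e = e} :=
    n.rec ⟨0, rfl⟩ fun n e => ⟨e.1 + (ψ e (task n)).comp (χ e (task n)),
      add_comp_idem e.2 (hχψ _ _) (hχe _ _) (heψ _ _)⟩
  let k' (n : ℕ) := k (E n) (task n)
  let ψ' (n : ℕ) := ψ (E n) (task n)
  let χ' (n : ℕ) := χ (E n) (task n)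
  have hE_succ (n : ℕ) : (E (n + 1)).1 = (E n).1 + (ψ' n).comp (χ' n) := rfl
  have hE (n : ℕ) : (E n).1 = partialProj ψ' χ' n := by
    induction n with
    | zero => simp [E, partialProj]
    | succ n ih => rw [partialProj_succ, ← ih, hE_succ]
  refine ⟨k', ψ', χ', ⟨fun n => hχψ _ _, fun n x => ?_, fun n a => ?_⟩, fun x => ?_⟩
  · rw [← hE]; exact hχe _ _ x
  · rw [← hE]; exact heψ _ _ a
  have hdescend (N j : ℕ) : ∃ n ≥ N,
      p ^ (j + 1) • (x - (E n).1 x) = 0 → p ^ j • (x - (E (n + 1)).1 x) = 0 := by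
    obtain ⟨a, ha⟩ := hτ (x, j)
    refine ⟨Nat.pair a N, Nat.right_le_pair a N, ?_⟩
    have htask : task (Nat.pair a N) = (x, j) := by simp [task, ha]
    rw [hE_succ]
    simpa [htask] using hprog (E (Nat.pair a N)) (task (Nat.pair a N))
  obtain ⟨J, hJ⟩ := htors x
  obtain ⟨M, hM⟩ := Nat.exists_of_frequently_descend (P := fun n j => p ^ j • (x - (E n).1 x) = 0)
    (fun n j => nsmul_sub_add_comp_apply_eq_zero (hχe _ _)) hdescend J 0 (by simpa [E] using hJ)
  exact ⟨M, (sub_eq_zero.mp (by simpa [hE] using hM)).symm⟩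

end Construction

theorem DirectSum.not_exists_nsmul_eq_of_apply_ne_zero {ι : Type*} {N : ι → ℕ}
    {y : ⨁ i, ZMod (N i)} {i : ι} (hy : y i ≠ 0) : ¬ ∃ x, N i • x = y := by
  rintro ⟨x, rfl⟩
  rw [DFinsupp.nsmul_apply, nsmul_eq_mul, ZMod.natCast_self, zero_mul] at hy
  exact hy rfl

/-- Prüfer: a countable Abelian p-group is a direct sum of cyclic groups
iff every nonzero element has finite height. -/
theorem stmt_3 (p : ℕ) (hp : p.Prime) (G : Type) [AddCommGroup G] [Countable G]
    (hG : ∀ g : G, ∃ n : ℕ, addOrderOf g = p ^ n) :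
    (∃ k : ℕ → ℕ, Nonempty (G ≃+ DirectSum ℕ fun i => ZMod (p ^ k i))) ↔
      ∀ g : G, g ≠ 0 → ∃ n : ℕ, ¬ ∃ x : G, p ^ n • x = g := by
  refine ⟨fun ⟨k, ⟨e⟩⟩ g hg => ?_, fun hht => ?_⟩
  · obtain ⟨i, hi⟩ : ∃ i, e g i ≠ 0 := by
      by_contra! h
      exact hg (e.map_eq_zero_iff.mp (DFinsupp.ext h))
    exact ⟨k i, fun ⟨x, hx⟩ =>
      DirectSum.not_exists_nsmul_eq_of_apply_ne_zero hi ⟨e x, by rw [← map_nsmul, hx]⟩⟩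
  · have htors (g : G) : ∃ n, p ^ n • g = 0 := by
      obtain ⟨n, hn⟩ := hG g
      exact ⟨n, hn ▸ addOrderOf_nsmul_eq_zero g⟩
    obtain ⟨k, ψ, χ, hsplit, hcover⟩ := exists_isSplittingSeq_zmod hp htors hht
    exact ⟨k, hsplit.nonempty_addEquiv_directSum hcover⟩
end

section
/- Let G be an Abelian p-group and let g, g' ∈ G be elements of the same finite order lying in divisible subgroups D, D' ≤ G each isomorphic to ℤ(p^∞). Then there is an automorphism of G mapping g to g'. -/
/-!
By Baer's criterion a divisible subgroup `D` is a retract of `G`: there is an idempotent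
`π : G →+ G` with image `D`, which may moreover be chosen to vanish on any subgroup meeting `D`
trivially; and a homomorphism from a cyclic subgroup into `D` extends to all of `G`. For such `π`
and any `φ : G →+ G`, the map `x ↦ x + (1 - π) φ π x` is an automorphism (a transvection),
because `(1 - π) φ π` squares to zero.

If `D ⊓ D' = ⊥`, take retractions onto `D` killing `D'` and onto `D'` killing `D`; two
transvections send `g ↦ g + g' ↦ g'`. Otherwise `D` and `D'` share their unique subgroup of
order `p`, so a retraction `π` onto `D` is injective on the `p`-group `D'`. One transvection
moves `π g'` to `g'`, and `π g'`, `g` are elements of the same order `p ^ k` in `D ≅ ℤ(p^∞)`,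
so `π g' = a • g` with `p ∤ a`; multiplication by such `a` is an automorphism of `G`.
-/

/-- The Prüfer p-group ℤ(p^∞): the p-primary component of ℚ/ℤ. -/
abbrev Prufer (p : ℕ) [Fact p.Prime] : Type :=
  ↥(AddCommGroup.primaryComponent (AddCircle (1 : ℚ)) p)

open AddSubgroup

section

variable {G : Type*} [AddCommGroup G]

theorem baer_of_forall_exists_nsmul_eq {D : AddSubgroup G}
    (hD : ∀ d ∈ D, ∀ n : ℕ, 0 < n → ∃ x ∈ D, n • x = d) : Module.Baer ℤ D := by
  let : DivisibleBy D ℕ := divisibleByOfSMulRightSurj _ _ fun {n} hn d ↦ by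
    obtain ⟨x, hx, hxd⟩ := hD d d.2 n (Nat.pos_of_ne_zero hn)
    exact ⟨⟨x, hx⟩, Subtype.ext hxd⟩
  let := AddGroup.divisibleByIntOfDivisibleByNat D
  exact Module.Baer.of_divisible D

theorem exists_addMonoidHom_apply_eq_of_baer {A : Type*} [AddCommGroup A]
    (hA : Module.Baer ℤ A) (g : G) (a : A) (h : addOrderOf g • a = 0) :
    ∃ F : G →+ A, F g = a := by
  let ι : ZMod (addOrderOf g) →+ G := ZMod.lift _ ⟨zmultiplesHom G g, by simp⟩
  let f : ZMod (addOrderOf g) →+ A := ZMod.lift _ ⟨zmultiplesHom A a, by simpa using h⟩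
  have hι : Function.Injective ι := by
    refine (injective_iff_map_eq_zero ι).mpr fun x hx ↦ ?_
    obtain ⟨m, rfl⟩ := ZMod.intCast_surjective x
    rw [ZMod.lift_coe, zmultiplesHom_apply, ← addOrderOf_dvd_iff_zsmul_eq_zero] at hx
    exact (ZMod.intCast_zmod_eq_zero_iff_dvd m _).mpr hx
  obtain ⟨F, hF⟩ := hA.extension_property_addMonoidHom ι hι f
  exact ⟨F, by simpa only [AddMonoidHom.comp_apply, ι, f, ZMod.lift_coe, zmultiplesHom_apply,
    one_zsmul] using DFunLike.congr_fun hF ((1 : ℤ) : ZMod (addOrderOf g))⟩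

theorem exists_addMonoidHom_apply_eq_mem_of_baer {D : AddSubgroup G} (hD : Module.Baer ℤ D)
    {g a : G} (ha : a ∈ D) (h : addOrderOf a ∣ addOrderOf g) : ∃ φ : G →+ G, φ g = a := by
  obtain ⟨F, hF⟩ := exists_addMonoidHom_apply_eq_of_baer hD g ⟨a, ha⟩ <| by
    rw [← addOrderOf_mk a ha] at h
    exact addOrderOf_dvd_iff_nsmul_eq_zero.mp h
  exact ⟨D.subtype.comp F, by simp [hF]⟩

theorem exists_retraction_of_baer {D B : AddSubgroup G} (hD : Module.Baer ℤ D) (hDB : D ⊓ B = ⊥) :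
    ∃ π : G →+ G, (∀ d ∈ D, π d = d) ∧ (∀ b ∈ B, π b = 0) ∧ ∀ x, π x ∈ D := by
  let q := QuotientAddGroup.mk' B
  have hinj : Function.Injective (q.comp D.subtype) := by
    refine (injective_iff_map_eq_zero _).mpr fun d hd ↦ Subtype.ext ?_
    have hdB : (d : G) ∈ B := (QuotientAddGroup.eq_zero_iff _).mp hd
    simpa [hDB] using (mem_inf.mpr ⟨d.2, hdB⟩ : (d : G) ∈ D ⊓ B)
  obtain ⟨w, hw⟩ := hD.extension_property_addMonoidHom _ hinj (AddMonoidHom.id D)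
  refine ⟨D.subtype.comp (w.comp q), fun d hd ↦ ?_, fun b hb ↦ ?_, fun x ↦ (w (q x)).2⟩
  · simpa using congrArg Subtype.val (DFunLike.congr_fun hw ⟨d, hd⟩)
  · simp [q, (QuotientAddGroup.eq_zero_iff b).mpr hb]

def transvection (π φ : G →+ G) (hπ : ∀ x, π (π x) = π x) : G ≃+ G where
  toFun x := x + (φ (π x) - π (φ (π x)))
  invFun x := x - (φ (π x) - π (φ (π x)))
  left_inv x := by simp [hπ]
  right_inv x := by simp [hπ]
  map_add' x y := by simp only [map_add]; abel

@[simp]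
theorem transvection_apply (π φ : G →+ G) (hπ : ∀ x, π (π x) = π x) (x : G) :
    transvection π φ hπ x = x + (φ (π x) - π (φ (π x))) := rfl

theorem mem_zmultiples_of_encard_le {n : ℕ} (hn : {x : G | n • x = 0}.encard ≤ n) {g x : G}
    (hg : addOrderOf g = n) (hx : n • x = 0) : x ∈ zmultiples g := by
  have hn0 : n ≠ 0 := by
    rintro rfl
    simp at hn
  have hfin : (zmultiples g : Set G).Finite :=
    (addOrderOf_pos_iff.mp (hg ▸ Nat.pos_of_ne_zero hn0)).finite_zmultiples
  have hsub : (zmultiples g : Set G) ⊆ {x | n • x = 0} := by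
    rintro _ ⟨m, rfl⟩
    change n • m • g = 0
    rw [smul_comm, ← hg, addOrderOf_nsmul_eq_zero, smul_zero]
  have hcard : (zmultiples g : Set G).encard = n := by
    rw [← hfin.cast_ncard_eq, ← Nat.card_coe_set_eq, SetLike.coe_sort_coe, Nat.card_zmultiples, hg]
  exact (Set.ext_iff.mp (hfin.eq_of_subset_of_encard_le hsub (hcard ▸ hn)) x).mpr hx

variable {p : ℕ} [hp : Fact p.Prime]

theorem encard_nsmul_eq_zero_le_of_addEquiv_prufer (e : G ≃+ Prufer p)
    {n : ℕ} (hn : n ≠ 0) : {x : G | n • x = 0}.encard ≤ n := by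
  let f : G →+ AddCircle (1 : ℚ) :=
    (AddCommGroup.primaryComponent _ p).subtype.comp e.toAddMonoidHom
  have hf : Function.Injective f := Subtype.val_injective.comp e.injective
  calc {x : G | n • x = 0}.encard = (f '' {x | n • x = 0}).encard := (hf.encard_image _).symm
    _ ≤ {y : AddCircle (1 : ℚ) | n • y = 0}.encard := by
        refine Set.encard_le_encard ?_
        rintro _ ⟨x, hx, rfl⟩
        simp only [Set.mem_ofPred_eq] at hx ⊢
        rw [← map_nsmul, hx, map_zero]
    _ ≤ n := AddCircle.card_torsion_le_of_isSMulRegular _ n hn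
        (.of_right_eq_zero_of_smul fun _ ↦ by simp [hn])

theorem mem_zmultiples_of_addEquiv_prufer {D : AddSubgroup G}
    (e : D ≃+ Prufer p) {g x : G} (hg : g ∈ D) (hx : x ∈ D) (hgx : addOrderOf g • x = 0) :
    x ∈ zmultiples g := by
  have hfin : addOrderOf g ≠ 0 := by
    obtain ⟨k, hk⟩ := AddCommGroup.mem_primaryComponent.mp (e ⟨g, hg⟩).2
    rw [← addOrderOf_mk g hg, ← e.addOrderOf_eq, ← AddSubgroup.addOrderOf_coe]
    exact (addOrderOf_pos_iff.mpr (isOfFinAddOrder_iff_nsmul_eq_zero.mpr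
      ⟨p ^ k, pow_pos hp.out.pos k, hk⟩)).ne'
  obtain ⟨m, hm⟩ := mem_zmultiples_of_encard_le
    (encard_nsmul_eq_zero_le_of_addEquiv_prufer e hfin) (addOrderOf_mk g hg) (x := ⟨x, hx⟩)
    (Subtype.ext hgx)
  exact ⟨m, congrArg Subtype.val hm⟩

theorem exists_addOrderOf_nsmul_eq_prime (hG : ∀ x : G, ∃ n : ℕ, addOrderOf x = p ^ n) {x : G}
    (hx : x ≠ 0) : ∃ m : ℕ, addOrderOf (m • x) = p := by
  obtain ⟨n, hn⟩ := hG x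
  obtain ⟨k, rfl⟩ : ∃ k, n = k + 1 := Nat.exists_eq_succ_of_ne_zero <| by
    rintro rfl
    exact hx (AddMonoid.addOrderOf_eq_one_iff.mp (by simpa using hn))
  refine ⟨p ^ k, ?_⟩
  rw [addOrderOf_nsmul_of_dvd (pow_ne_zero k hp.out.ne_zero) (hn ▸ pow_dvd_pow p k.le_succ), hn,
    pow_succ, Nat.mul_div_cancel_left p (pow_pos hp.out.pos k)]

theorem addOrderOf_map_eq_of_ne_zero_on_socle (hG : ∀ x : G, ∃ n : ℕ, addOrderOf x = p ^ n)
    {H : Type*} [AddCommGroup H] (S : AddSubgroup G) (f : G →+ H)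
    (hf : ∀ t ∈ S, addOrderOf t = p → f t ≠ 0) {y : G} (hy : y ∈ S) :
    addOrderOf (f y) = addOrderOf y := by
  refine (addOrderOf_map_dvd f y).antisymm (addOrderOf_dvd_of_nsmul_eq_zero ?_)
  by_contra hne
  obtain ⟨m, hm⟩ := exists_addOrderOf_nsmul_eq_prime hG hne
  refine hf _ (S.nsmul_mem (S.nsmul_mem hy _) m) hm ?_
  rw [map_nsmul, map_nsmul, addOrderOf_nsmul_eq_zero, smul_zero]

theorem bijective_zsmul_of_not_dvd (hG : ∀ x : G, ∃ n : ℕ, addOrderOf x = p ^ n) {a : ℤ}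
    (ha : ¬ (p : ℤ) ∣ a) : Function.Bijective (zsmulAddGroupHom (α := G) a) := by
  have hcop : IsCoprime (p : ℤ) a :=
    (Irreducible.coprime_iff_not_dvd (Nat.prime_iff_prime_int.mp hp.out).irreducible).mpr ha
  have hinv (x : G) : ∃ u : ℤ, u • a • x = x := by
    obtain ⟨n, hn⟩ := hG x
    obtain ⟨v, u, h⟩ := hcop.pow_left (m := n)
    refine ⟨u, ?_⟩
    have hpx : ((p : ℤ) ^ n) • x = 0 := by
      rw [← Nat.cast_pow, natCast_zsmul, ← hn, addOrderOf_nsmul_eq_zero]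
    rw [smul_smul, ← sub_eq_of_eq_add' h.symm, sub_smul, one_smul, mul_smul, hpx, smul_zero,
      sub_zero]
  refine ⟨(injective_iff_map_eq_zero _).mpr fun x hx ↦ ?_, fun y ↦ ?_⟩
  · obtain ⟨u, hu⟩ := hinv x
    rw [← hu, show a • x = 0 from hx, smul_zero]
  · obtain ⟨u, hu⟩ := hinv y
    exact ⟨u • y, by rw [zsmulAddGroupHom_apply, smul_comm, hu]⟩

theorem exists_addEquiv_apply_eq_zsmul (hG : ∀ x : G, ∃ n : ℕ, addOrderOf x = p ^ n) {g : G}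
    {a : ℤ} (h : addOrderOf (a • g) = addOrderOf g) : ∃ σ : G ≃+ G, σ g = a • g := by
  rcases eq_or_ne g 0 with rfl | hg
  · exact ⟨AddEquiv.refl G, by simp⟩
  suffices ha : ¬ (p : ℤ) ∣ a from
    ⟨AddEquiv.ofBijective _ (bijective_zsmul_of_not_dvd hG ha), rfl⟩
  rintro ⟨b, rfl⟩
  obtain ⟨n, hn⟩ := hG g
  obtain ⟨k, rfl⟩ : ∃ k, n = k + 1 := Nat.exists_eq_succ_of_ne_zero <| by
    rintro rfl
    exact hg (AddMonoid.addOrderOf_eq_one_iff.mp (by simpa using hn))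
  have hpg : addOrderOf (p • g) = p ^ k := by
    rw [addOrderOf_nsmul_of_dvd hp.out.ne_zero (hn ▸ dvd_pow_self p k.succ_ne_zero), hn,
      pow_succ, Nat.mul_div_cancel _ hp.out.pos]
  have hdvd : p ^ (k + 1) ∣ p ^ k := by
    rw [← hn, ← h, ← hpg, mul_comm, mul_smul, natCast_zsmul]
    exact addOrderOf_map_dvd (zsmulAddGroupHom b) _
  rw [Nat.pow_dvd_pow_iff_le_right hp.out.one_lt] at hdvd
  omega

theorem mem_of_addOrderOf_eq_prime_of_inf_ne_bot (hG : ∀ x : G, ∃ n : ℕ, addOrderOf x = p ^ n)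
    {D D' : AddSubgroup G} (e' : D' ≃+ Prufer p) (hDD' : D ⊓ D' ≠ ⊥) {t : G} (ht : t ∈ D')
    (hto : addOrderOf t = p) : t ∈ D := by
  obtain ⟨⟨x, hx⟩, hx0⟩ := AddSubgroup.ne_bot_iff_exists_ne_zero.mp hDD'
  obtain ⟨m, hm⟩ := exists_addOrderOf_nsmul_eq_prime hG (x := x) (by simpa using hx0)
  have hmx : m • x ∈ D ⊓ D' := nsmul_mem hx m
  have := mem_zmultiples_of_addEquiv_prufer e' (mem_inf.mp hmx).2 ht
    (by rw [hm, ← hto, addOrderOf_nsmul_eq_zero])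
  exact zmultiples_le_of_mem (mem_inf.mp hmx).1 this

theorem exists_addEquiv_apply_eq_of_inf_eq_bot {D D' : AddSubgroup G} (hD : Module.Baer ℤ D)
    (hD' : Module.Baer ℤ D') (hDD' : D ⊓ D' = ⊥) {g g' : G} (hg : g ∈ D) (hg' : g' ∈ D')
    (hord : addOrderOf g = addOrderOf g') : ∃ σ : G ≃+ G, σ g = g' := by
  obtain ⟨π, hπD, hπD', hπ⟩ := exists_retraction_of_baer hD hDD'
  obtain ⟨π', hπ'D', hπ'D, hπ'⟩ := exists_retraction_of_baer hD' (inf_comm D D' ▸ hDD')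
  obtain ⟨φ, hφ⟩ := exists_addMonoidHom_apply_eq_mem_of_baer hD' (g := g) hg' (dvd_of_eq hord.symm)
  obtain ⟨φ', hφ'⟩ := exists_addMonoidHom_apply_eq_mem_of_baer hD (g := g') (neg_mem hg)
    (by rw [addOrderOf_neg, hord])
  refine ⟨(transvection π φ fun x ↦ hπD _ (hπ x)).trans
    (transvection π' φ' fun x ↦ hπ'D' _ (hπ' x)), ?_⟩
  simp [hπD g hg, hπD' g' hg', hπ'D g hg, hπ'D' g' hg', hφ, hφ']

theorem exists_addEquiv_apply_eq_of_socle_le (hG : ∀ x : G, ∃ n : ℕ, addOrderOf x = p ^ n)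
    {D D' : AddSubgroup G} (hD : Module.Baer ℤ D) (hD' : Module.Baer ℤ D') (e : D ≃+ Prufer p)
    (hsoc : ∀ t ∈ D', addOrderOf t = p → t ∈ D) {g g' : G} (hg : g ∈ D) (hg' : g' ∈ D')
    (hord : addOrderOf g = addOrderOf g') : ∃ σ : G ≃+ G, σ g = g' := by
  obtain ⟨π, hπD, -, hπ⟩ := exists_retraction_of_baer hD (inf_bot_eq D)
  have hπ2 (x : G) : π (π x) = π x := hπD _ (hπ x)
  have hπg' : addOrderOf (π g') = addOrderOf g' :=
    addOrderOf_map_eq_of_ne_zero_on_socle hG D' π (fun t ht hto ↦ by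
      rw [hπD t (hsoc t ht hto)]
      rintro rfl
      exact hp.out.one_lt.ne (by simpa using hto)) hg'
  obtain ⟨φ, hφ⟩ :=
    exists_addMonoidHom_apply_eq_mem_of_baer hD' (g := π g') hg' (dvd_of_eq hπg'.symm)
  obtain ⟨a, ha⟩ := mem_zmultiples_iff.mp <| mem_zmultiples_of_addEquiv_prufer e hg (hπ g')
    (by rw [hord, ← hπg', addOrderOf_nsmul_eq_zero])
  obtain ⟨τ, hτ⟩ := exists_addEquiv_apply_eq_zsmul hG (g := g) (a := a) (by rw [ha, hπg', hord])
  refine ⟨τ.trans (transvection π φ hπ2), ?_⟩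
  simp [hτ, ha, hπ2, hφ]

end

/-- elements of the same finite order lying in divisible subgroups of G
each isomorphic to ℤ(p^∞) are automorphic in G. -/
theorem stmt_10 (p : ℕ) [Fact p.Prime] (G : Type) [AddCommGroup G]
    (hG : ∀ g : G, ∃ n : ℕ, addOrderOf g = p ^ n)
    (D D' : AddSubgroup G)
    (hDdiv : ∀ d ∈ D, ∀ n : ℕ, 0 < n → ∃ x ∈ D, n • x = d)
    (hD'div : ∀ d ∈ D', ∀ n : ℕ, 0 < n → ∃ x ∈ D', n • x = d)
    (hD : Nonempty (D ≃+ Prufer p)) (hD' : Nonempty (D' ≃+ Prufer p))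
    (g g' : G) (hg : g ∈ D) (hg' : g' ∈ D') (k : ℕ)
    (hord : addOrderOf g = p ^ k) (hord' : addOrderOf g' = p ^ k) :
    ∃ e : G ≃+ G, e g = g' := by
  have hB := baer_of_forall_exists_nsmul_eq hDdiv
  have hB' := baer_of_forall_exists_nsmul_eq hD'div
  obtain ⟨e⟩ := hD
  obtain ⟨e'⟩ := hD'
  by_cases hDD' : D ⊓ D' = ⊥
  · exact exists_addEquiv_apply_eq_of_inf_eq_bot hB hB' hDD' hg hg' (hord.trans hord'.symm)
  · exact exists_addEquiv_apply_eq_of_socle_le hG hB hB' e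
      (fun _ ht hto ↦ mem_of_addOrderOf_eq_prime_of_inf_ne_bot hG e' hDD' ht hto) hg hg'
      (hord.trans hord'.symm)
end

section
/- If F is a finite pure subgroup of an Abelian p-group G in which all elements have finite height, then F is a direct summand of G, and any isomorphism between two finite pure subgroups F and F' of G that are abstractly isomorphic extends to an automorphism of G when G = F ⊕ H = F' ⊕ H' with H ≅ H'. -/
/-!
A finite pure subgroup `F` of a `p`-group is a direct summand: an element `b ∈ F` of maximal
order `p ^ k` spans a cyclic subgroup meeting `p ^ k G` trivially, and a subgroup `H ⊇ p ^ k G`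
maximal with `⟨b⟩ ∩ H = 0` is a complement of `⟨b⟩`. Then `F = ⟨b⟩ ⊕ (F ∩ H)` with `F ∩ H` pure
and smaller, and a complement of `F ∩ H` cut down to `H` complements `F`. Given two decompositions
`G = F ⊕ H = F' ⊕ H'`, isomorphisms `F ≃ F'` and `H ≃ H'` glue to an automorphism of `G`.
-/

open AddSubgroup

theorem IsCompl.isCompl_inf_of_isCompl_inf {α : Type*} [Lattice α] [BoundedOrder α]
    [IsModularLattice α] {c h f k : α} (hch : IsCompl c h) (hcf : c ≤ f)
    (hk : IsCompl (f ⊓ h) k) : IsCompl f (h ⊓ k) := by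
  refine ⟨by simpa only [disjoint_iff, inf_assoc] using hk.disjoint, codisjoint_iff.mpr ?_⟩
  have hh : f ⊓ h ⊔ h ⊓ k = h := by
    rw [inf_comm h k, IsModularLattice.inf_sup_inf_assoc, hk.sup_eq_top, top_inf_eq]
  refine eq_top_iff.mpr ?_
  calc ⊤ = c ⊔ h := hch.sup_eq_top.symm
    _ = c ⊔ (f ⊓ h ⊔ h ⊓ k) := by rw [hh]
    _ ≤ f ⊔ (h ⊓ k) := sup_le (hcf.trans le_sup_left) (sup_le_sup_right inf_le_left _)

namespace AddSubgroup

theorem exists_le_maximal_disjoint {G : Type*} [AddGroup G] {C P : AddSubgroup G}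
    (h : Disjoint C P) : ∃ H, P ≤ H ∧ Maximal (Disjoint C) H := by
  refine zorn_le_nonempty₀ _ (fun c hc hchain K hK => ?_) P h
  refine ⟨sSup c, disjoint_def.mpr fun hxC hxc => ?_, fun _ => le_sSup⟩
  obtain ⟨K', hK'c, hxK'⟩ := (mem_sSup_of_directedOn ⟨K, hK⟩ hchain.directedOn).mp hxc
  exact disjoint_def.mp (hc hK'c) hxC hxK'

variable {G : Type*} [AddCommGroup G]

theorem mem_of_zsmul_mem_of_isCoprime {K : AddSubgroup G} {x : G} {a b : ℤ} (hab : IsCoprime a b)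
    (ha : a • x ∈ K) (hb : b • x ∈ K) : x ∈ K := by
  obtain ⟨u, v, huv⟩ := hab
  have hx : x = u • a • x + v • b • x := by rw [smul_smul, smul_smul, ← add_smul, huv, one_smul]
  rw [hx]
  exact add_mem (zsmul_mem ha u) (zsmul_mem hb v)

theorem mem_sup_of_prime_nsmul_mem {p : ℕ} (hp : p.Prime) {C H : AddSubgroup G}
    (hH : Maximal (Disjoint C) H) {x : G} (hx : p • x ∈ H) : x ∈ C ⊔ H := by
  by_contra hxCH
  -- maximality of `H` gives `0 ≠ h + t • x ∈ C`; then `p ∤ t`, and Bézout puts `x` in `C ⊔ H`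
  have hnd : ¬ Disjoint C (H ⊔ zmultiples x) := fun hd =>
    hxCH (mem_sup_right (hH.le_of_ge hd le_sup_left (mem_sup_right (mem_zmultiples x))))
  simp only [disjoint_def, not_forall] at hnd
  obtain ⟨c, hcC, hcHx, hc0⟩ := hnd
  obtain ⟨h, hh, _, ⟨t, rfl⟩, rfl⟩ := mem_sup.mp hcHx
  have hpx : (p : ℤ) • x ∈ H := by rwa [natCast_zsmul]
  by_cases hpt : (p : ℤ) ∣ t
  · obtain ⟨s, rfl⟩ := hpt
    have hsx : ((p : ℤ) * s) • x ∈ H := by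
      rw [mul_comm, mul_smul]
      exact zsmul_mem hpx s
    exact hc0 (disjoint_def.mp hH.prop hcC (add_mem hh hsx))
  · have htx : t • x ∈ C ⊔ H := by
      simpa using sub_mem (mem_sup_left hcC) (mem_sup_right hh)
    exact hxCH (mem_of_zsmul_mem_of_isCoprime
      ((Nat.prime_iff_prime_int.mp hp).irreducible.coprime_iff_not_dvd.mpr hpt)
      (mem_sup_right hpx) htx)

theorem exists_mem_zmultiples_nsmul_eq_of_pow_nsmul_eq_zero {p k : ℕ} (hp : p ≠ 0) {b c : G}
    (hb : addOrderOf b = p ^ (k + 1)) (hc : c ∈ zmultiples b) (hkc : p ^ k • c = 0) :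
    ∃ c' ∈ zmultiples b, p • c' = c := by
  obtain ⟨m, rfl⟩ := mem_zmultiples_iff.mp hc
  have hdvd : (p : ℤ) ^ k * p ∣ (p : ℤ) ^ k * m := by
    rw [← pow_succ, ← Nat.cast_pow, ← hb, addOrderOf_dvd_iff_zsmul_eq_zero, mul_smul,
      ← Nat.cast_pow, natCast_zsmul, hkc]
  obtain ⟨m', rfl⟩ := (mul_dvd_mul_iff_left (pow_ne_zero k (Int.natCast_ne_zero.mpr hp))).mp hdvd
  exact ⟨m' • b, zsmul_mem (mem_zmultiples b) m', by rw [← natCast_zsmul, smul_smul]⟩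

abbrev powNSMulRange (p k : ℕ) (G : Type*) [AddCommGroup G] : AddSubgroup G :=
  (nsmulAddMonoidHom (p ^ k) : G →+ G).range

theorem exists_isCompl_zmultiples {p k : ℕ} (hp : p.Prime) {b : G} (hb : addOrderOf b = p ^ k)
    (hdisj : Disjoint (zmultiples b) (powNSMulRange p k G)) :
    ∃ H, IsCompl (zmultiples b) H := by
  rcases k with _ | k
  · rw [AddMonoid.addOrderOf_eq_one_iff.mp hb, zmultiples_zero_eq_bot]
    exact ⟨⊤, isCompl_bot_top⟩
  obtain ⟨H, hPH, hH⟩ := exists_le_maximal_disjoint hdisj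
  refine ⟨H, hH.prop, codisjoint_iff.mpr (eq_top_iff.mpr fun x _ => ?_)⟩
  suffices hpow : ∀ r (x : G), p ^ r • x ∈ H → x ∈ zmultiples b ⊔ H from
    hpow (k + 1) x (hPH ⟨x, rfl⟩)
  intro r
  induction r with
  | zero => intro x hx; simpa using mem_sup_right hx
  | succ r ih =>
    intro x hx
    obtain ⟨c, hc, h, hh, hch⟩ := mem_sup.mp (ih (p • x) (by rwa [smul_smul, ← pow_succ]))
    have hkc : p ^ k • c = 0 := by
      refine disjoint_def.mp hH.prop (nsmul_mem hc _) ?_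
      have : p ^ k • c = p ^ (k + 1) • x - p ^ k • h := by
        rw [pow_succ, mul_smul, ← hch, smul_add, add_sub_cancel_right]
      exact this ▸ sub_mem (hPH ⟨x, rfl⟩) (nsmul_mem hh _)
    obtain ⟨c', hc', rfl⟩ :=
      exists_mem_zmultiples_nsmul_eq_of_pow_nsmul_eq_zero hp.ne_zero hb hc hkc
    have hxc' : x - c' ∈ zmultiples b ⊔ H :=
      mem_sup_of_prime_nsmul_mem hp hH (by rwa [smul_sub, sub_eq_of_eq_add' hch.symm])
    simpa using add_mem hxc' (mem_sup_left hc')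

def IsPPure (p : ℕ) (F : AddSubgroup G) : Prop :=
  ∀ n : ℕ, ∀ a ∈ F, (∃ x : G, p ^ n • x = a) → ∃ b ∈ F, p ^ n • b = a

theorem IsPPure.disjoint_powNSMulRange {p k : ℕ} {F : AddSubgroup G} (hF : F.IsPPure p)
    (hk : ∀ c ∈ F, p ^ k • c = 0) : Disjoint F (powNSMulRange p k G) := by
  refine disjoint_def.mpr fun haF ⟨x, hx⟩ => ?_
  obtain ⟨c, hcF, rfl⟩ := hF k _ haF ⟨x, hx⟩
  exact hk c hcF

theorem IsPPure.inf_of_isCompl {p : ℕ} {F C H : AddSubgroup G} (hF : F.IsPPure p)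
    (hCH : IsCompl C H) (hCF : C ≤ F) : (F ⊓ H).IsPPure p := by
  intro n a ha hax
  obtain ⟨haF, haH⟩ := mem_inf.mp ha
  obtain ⟨f, hfF, rfl⟩ := hF n a haF hax
  obtain ⟨c, hc, h, hh, rfl⟩ := mem_sup.mp (hCH.sup_eq_top ▸ mem_top f)
  have hnc : p ^ n • c = 0 := by
    refine disjoint_def.mp hCH.disjoint (nsmul_mem hc _) ?_
    simpa [smul_add] using sub_mem haH (nsmul_mem hh (p ^ n))
  exact ⟨h, ⟨by simpa using sub_mem hfF (hCF hc), hh⟩, by simp [smul_add, hnc]⟩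

theorem IsPPure.exists_isCompl {p : ℕ} (hp : p.Prime) {F : AddSubgroup G}
    (hfin : (F : Set G).Finite) (horder : ∀ g ∈ F, ∃ n, addOrderOf g = p ^ n)
    (hF : F.IsPPure p) : ∃ H, IsCompl F H := by
  induction hcard : (F : Set G).ncard using Nat.strong_induction_on generalizing F with
  | _ n ih =>
  obtain ⟨b, hbF, hbmax⟩ := Set.exists_max_image _ addOrderOf hfin ⟨0, F.zero_mem⟩
  obtain ⟨k, hk⟩ := horder b hbF
  have hexp : ∀ c ∈ F, p ^ k • c = 0 := fun c hc => by
    obtain ⟨j, hj⟩ := horder c hc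
    have hjk : j ≤ k := (Nat.pow_le_pow_iff_right hp.one_lt).mp (hj ▸ hk ▸ hbmax c hc)
    exact addOrderOf_dvd_iff_nsmul_eq_zero.mp (hj ▸ pow_dvd_pow p hjk)
  by_cases hb0 : b = 0
  · have hpk : p ^ k = 1 := by rw [← hk, hb0, addOrderOf_zero]
    have hF0 : F = ⊥ := eq_bot_iff.mpr fun c hc => by
      simpa [hpk] using hexp c hc
    exact ⟨⊤, hF0 ▸ isCompl_bot_top⟩
  have hbF_le : zmultiples b ≤ F := zmultiples_le.mpr hbF
  obtain ⟨H, hbH⟩ := exists_isCompl_zmultiples hp hk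
    ((hF.disjoint_powNSMulRange hexp).mono_left hbF_le)
  have hbH_not : b ∉ H := fun hbH' => hb0 (disjoint_def.mp hbH.disjoint (mem_zmultiples b) hbH')
  have hlt : (F ⊓ H : Set G).ncard < n :=
    hcard ▸ Set.ncard_lt_ncard (inf_lt_left.mpr fun hFH => hbH_not (hFH hbF)) hfin
  obtain ⟨K, hK⟩ := ih _ hlt (hfin.subset inf_le_left) (fun g hg => horder g (mem_inf.mp hg).1)
    (hF.inf_of_isCompl hbH hbF_le) rfl
  exact ⟨H ⊓ K, hbH.isCompl_inf_of_isCompl_inf hbF_le hK⟩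

end AddSubgroup

noncomputable def AddEquiv.ofIsCompl {G G' : Type*} [AddCommGroup G] [AddCommGroup G']
    {F H : AddSubgroup G} {F' H' : AddSubgroup G'} (hFH : IsCompl F H) (hFH' : IsCompl F' H')
    (φ : F ≃+ F') (ψ : H ≃+ H') : G ≃+ G' :=
  let φ' : toIntSubmodule F ≃ₗ[ℤ] toIntSubmodule F' := φ.toIntLinearEquiv
  let ψ' : toIntSubmodule H ≃ₗ[ℤ] toIntSubmodule H' := ψ.toIntLinearEquiv
  ((Submodule.prodEquivOfIsCompl _ _ (toIntSubmodule.isCompl hFH)).symm.trans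
    ((φ'.prodCongr ψ').trans
      (Submodule.prodEquivOfIsCompl _ _ (toIntSubmodule.isCompl hFH')))).toAddEquiv

theorem AddEquiv.ofIsCompl_apply_coe {G G' : Type*} [AddCommGroup G] [AddCommGroup G']
    {F H : AddSubgroup G} {F' H' : AddSubgroup G'} (hFH : IsCompl F H) (hFH' : IsCompl F' H')
    (φ : F ≃+ F') (ψ : H ≃+ H') (x : F) : AddEquiv.ofIsCompl hFH hFH' φ ψ x = φ x := by
  have hx : (x : G) ∈ toIntSubmodule F := x.2
  simp only [ofIsCompl, coe_mk, AddHom.toFun_eq_coe, LinearMap.coe_toAddHom,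
    LinearEquiv.coe_coe, LinearEquiv.invFun_eq_symm, LinearEquiv.trans_symm,
    LinearEquiv.symm_symm, Equiv.coe_fn_mk, LinearEquiv.trans_apply,
    Submodule.prodEquivOfIsCompl_symm_apply, Submodule.projectionOnto_apply_of_mem_left _ hx,
    Submodule.projectionOnto_apply_of_mem_right _ hx, Submodule.coe_prodEquivOfIsCompl']
  show (φ x : G') + (ψ 0 : G') = φ x
  simp

theorem stmt_11_general (p : ℕ) (hp : p.Prime) (G : Type) [AddCommGroup G]
    (hG : ∀ g : G, ∃ n : ℕ, addOrderOf g = p ^ n)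
    (F : AddSubgroup G) (hFfin : (F : Set G).Finite)
    (hFpure : ∀ n : ℕ, ∀ a ∈ F, (∃ x : G, p ^ n • x = a) → ∃ b ∈ F, p ^ n • b = a) :
    (∃ H : AddSubgroup G, IsCompl F H) ∧
      ∀ F' : AddSubgroup G, (F' : Set G).Finite →
        (∀ n : ℕ, ∀ a ∈ F', (∃ x : G, p ^ n • x = a) → ∃ b ∈ F', p ^ n • b = a) →
        ∀ H H' : AddSubgroup G, IsCompl F H → IsCompl F' H' → Nonempty (H ≃+ H') →
          ∀ φ : F ≃+ F', ∃ e : G ≃+ G, ∀ x : F, e ↑x = ↑(φ x) := by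
  refine ⟨AddSubgroup.IsPPure.exists_isCompl hp hFfin (fun g _ => hG g) hFpure, ?_⟩
  rintro F' - - H H' hFH hFH' ⟨ψ⟩ φ
  exact ⟨AddEquiv.ofIsCompl hFH hFH' φ ψ, AddEquiv.ofIsCompl_apply_coe hFH hFH' φ ψ⟩

/-- in an Abelian p-group with all elements of finite height, a finite
pure subgroup F is a direct summand, and any isomorphism between two finite pure
subgroups F ≅ F' extends to an automorphism of G when G = F ⊕ H = F' ⊕ H' with H ≅ H'. -/
theorem stmt_11 (p : ℕ) (hp : p.Prime) (G : Type) [AddCommGroup G]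
    (hG : ∀ g : G, ∃ n : ℕ, addOrderOf g = p ^ n)
    (hht : ∀ g : G, g ≠ 0 → ∃ n : ℕ, ¬ ∃ x : G, p ^ n • x = g)
    (F : AddSubgroup G) (hFfin : (F : Set G).Finite)
    (hFpure : ∀ n : ℕ, ∀ a ∈ F, (∃ x : G, p ^ n • x = a) → ∃ b ∈ F, p ^ n • b = a) :
    (∃ H : AddSubgroup G, IsCompl F H) ∧
      ∀ F' : AddSubgroup G, (F' : Set G).Finite →
        (∀ n : ℕ, ∀ a ∈ F', (∃ x : G, p ^ n • x = a) → ∃ b ∈ F', p ^ n • b = a) →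
        ∀ H H' : AddSubgroup G, IsCompl F H → IsCompl F' H' → Nonempty (H ≃+ H') →
          ∀ φ : F ≃+ F', ∃ e : G ≃+ G, ∀ x : F, e ↑x = ↑(φ x) :=
  stmt_11_general p hp G hG F hFfin hFpure
end

section
/- Let G be an Abelian p-group, D(G) its divisible part, and suppose H ≤ G satisfies: H ∩ D(G) = {0}, H is pure in G, and every element of G of order p lies in D(G) + H. Then G = D(G) ⊕ H. -/
/-! Every element of the p-group G is killed by some p ^ n, and one shows by induction on n that
such an element lies in D(G) + H. If p ^ (n+1) • g = 0, then p ^ n • g has order dividing p, so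
p ^ n • g = d + h with d ∈ D(G), h ∈ H. Writing d = p ^ n • d' inside D(G), the element h is
divisible by p ^ n in G, hence by purity h = p ^ n • b with b ∈ H; then p ^ n kills g - d' - b. -/

/-- The divisible part of an Abelian group: the largest divisible subgroup,
i.e. the join of all divisible subgroups. -/
def divisiblePart (G : Type) [AddCommGroup G] : AddSubgroup G :=
  sSup {D : AddSubgroup G | ∀ d ∈ D, ∀ n : ℕ, 0 < n → ∃ x ∈ D, n • x = d}

namespace AddSubgroup

variable {G : Type} [AddCommGroup G]

def IsDivisible (K : AddSubgroup G) : Prop :=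
  ∀ d ∈ K, ∀ n : ℕ, 0 < n → ∃ x ∈ K, n • x = d

/-- Purity with respect to p: `H ∩ p ^ n G = p ^ n H` for all `n`. -/
def IsPowPure (p : ℕ) (H : AddSubgroup G) : Prop :=
  ∀ n : ℕ, ∀ a ∈ H, (∃ x : G, p ^ n • x = a) → ∃ b ∈ H, p ^ n • b = a

theorem isDivisible_divisiblePart : (divisiblePart G).IsDivisible := by
  intro d hd n hn
  rw [divisiblePart, sSup_eq_iSup'] at hd
  refine iSup_induction (C := fun d => ∃ x ∈ divisiblePart G, n • x = d) _ hd
    (fun D d hd => ?_) ⟨0, zero_mem _, smul_zero n⟩ ?_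
  · obtain ⟨x, hx, rfl⟩ := D.2 d hd n hn
    exact ⟨x, le_sSup D.2 hx, rfl⟩
  · rintro _ _ ⟨x, hx, rfl⟩ ⟨y, hy, rfl⟩
    exact ⟨x + y, add_mem hx hy, smul_add n x y⟩

theorem mem_sup_of_pow_smul_eq_zero {p : ℕ} (hp : 0 < p) {K H : AddSubgroup G}
    (hK : K.IsDivisible) (hH : H.IsPowPure p) (htors : ∀ g : G, p • g = 0 → g ∈ K ⊔ H)
    (n : ℕ) {g : G} (hg : p ^ n • g = 0) : g ∈ K ⊔ H := by
  induction n generalizing g with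
  | zero => simp_all
  | succ n ih =>
    have hpn : p • (p ^ n • g) = 0 := by rwa [smul_smul, ← pow_succ']
    obtain ⟨d, hd, h, hh, hdh⟩ := mem_sup.mp (htors _ hpn)
    obtain ⟨d', hd', rfl⟩ := hK d hd (p ^ n) (pow_pos hp n)
    obtain ⟨b, hb, rfl⟩ := hH n h hh ⟨g - d', by rw [smul_sub, ← hdh, add_sub_cancel_left]⟩
    have hrest : p ^ n • (g - d' - b) = 0 := by rw [smul_sub, smul_sub, ← hdh]; abel
    have hsplit : g = (g - d' - b) + (d' + b) := by abel
    rw [hsplit]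
    exact add_mem (ih hrest) (add_mem (mem_sup_left hd') (mem_sup_right hb))

end AddSubgroup

theorem stmt_15_general (p : ℕ) (hp : p.Prime) (G : Type) [AddCommGroup G]
    (hG : ∀ g : G, ∃ n : ℕ, addOrderOf g = p ^ n)
    (H : AddSubgroup G)
    (hinter : H ⊓ divisiblePart G = ⊥)
    (hpure : ∀ n : ℕ, ∀ a ∈ H, (∃ x : G, p ^ n • x = a) → ∃ b ∈ H, p ^ n • b = a)
    (horder : ∀ g : G, p • g = 0 → g ∈ divisiblePart G ⊔ H) :
    IsCompl (divisiblePart G) H := by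
  refine ⟨disjoint_iff.mpr (inf_comm H _ ▸ hinter), codisjoint_iff_le_sup.mpr fun g _ => ?_⟩
  obtain ⟨n, hn⟩ := hG g
  exact AddSubgroup.mem_sup_of_pow_smul_eq_zero hp.pos AddSubgroup.isDivisible_divisiblePart
    hpure horder n (hn ▸ addOrderOf_nsmul_eq_zero g)

/-- if G is an Abelian p-group of length at most ω (the divisible part is
exactly the set of elements divisible by all p^n), H ≤ G is pure, H ∩ D(G) = 0, and every
element of order p lies in D(G) + H, then G = D(G) ⊕ H. -/
theorem stmt_15 (p : ℕ) (hp : p.Prime) (G : Type) [AddCommGroup G]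
    (hG : ∀ g : G, ∃ n : ℕ, addOrderOf g = p ^ n)
    (hlen : ∀ g : G, g ∈ divisiblePart G ↔ ∀ n : ℕ, ∃ x : G, p ^ n • x = g)
    (H : AddSubgroup G)
    (hinter : H ⊓ divisiblePart G = ⊥)
    (hpure : ∀ n : ℕ, ∀ a ∈ H, (∃ x : G, p ^ n • x = a) → ∃ b ∈ H, p ^ n • b = a)
    (horder : ∀ g : G, p • g = 0 → g ∈ divisiblePart G ⊔ H) :
    IsCompl (divisiblePart G) H :=
  stmt_15_general p hp G hG H hinter hpure horder
end
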